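/- The transition operator T = exp(−(t/2) ∂_q ∂_p) on C[[t,q,p]], i.e. Tf = Σ_{n≥0} (−t/2)^n (∂_q^n ∂_p^n f)/n!, intertwines the standard and Moyal star products: T(f ⋆_S g) = (Tf) ⋆_M (Tg) for all f,g ∈ C[[t,q,p]]. -/

import Mathlib

open MvPowerSeries

noncomputable section

/-- Formal power series ring `ℂ[[t,q,p]]`, variable `0 = t`, `1 = q`, `2 = p`. -/
abbrev F3 : Type := MvPowerSeries (Fin 3) ℂ

/-- Formal partial derivative with respect to variable `i`. -/
def pd (i : Fin 3) (f : F3) : F3 :=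
  fun n => ((n i : ℂ) + 1) * MvPowerSeries.coeff (R := ℂ) (n + Finsupp.single i 1) f

/-- Moyal star product
`f ⋆_M g = Σ_k (t^k/(2^k k!)) Σ_{n=0}^k (-1)^(k-n) C(k,n) (∂_p^n ∂_q^(k-n) f)(∂_p^(k-n) ∂_q^n g)`,
written coefficientwise. -/
def starM (f g : F3) : F3 := fun w =>
  ∑ k ∈ Finset.range (w 0 + 1),
    (((2 ^ k * k.factorial : ℕ) : ℂ))⁻¹ *
      MvPowerSeries.coeff (R := ℂ) (w - Finsupp.single 0 k)
        (∑ n ∈ Finset.range (k + 1),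
          (((-1 : ℂ)) ^ (k - n) * (k.choose n : ℂ)) •
            ((pd 2)^[n] ((pd 1)^[k - n] f) * (pd 2)^[k - n] ((pd 1)^[n] g)))

/-- Standard star product `f ⋆_S g = Σ_k (t^k/k!) (∂_p^k f)(∂_q^k g)`, coefficientwise. -/
def starS (f g : F3) : F3 := fun w =>
  ∑ k ∈ Finset.range (w 0 + 1),
    ((k.factorial : ℂ))⁻¹ *
      MvPowerSeries.coeff (R := ℂ) (w - Finsupp.single 0 k) ((pd 2)^[k] f * (pd 1)^[k] g)

/-- The transition operator T = exp(−(t/2) ∂_q ∂_p), i.e.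
Tf = Σ_n (−t/2)^n (∂_q^n ∂_p^n f)/n!, written coefficientwise. -/
def opT (f : F3) : F3 := fun w =>
  ∑ n ∈ Finset.range (w 0 + 1),
    (((-2 : ℂ))⁻¹ ^ n / (n.factorial : ℂ)) *
      MvPowerSeries.coeff (R := ℂ) (w - Finsupp.single 0 n) ((pd 1)^[n] ((pd 2)^[n] f))

namespace StarAux

open Finset

/-! ### Generic sum reindexing lemmas -/

lemma TRIc (N : ℕ) (G : ℕ → ℕ → ℂ) :
    ∑ k ∈ Finset.range (N+1), ∑ j ∈ Finset.range (N-k+1), G k j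
      = ∑ m ∈ Finset.range (N+1), ∑ k ∈ Finset.range (m+1), G k (m-k) := by
  rw [Finset.sum_sigma', Finset.sum_sigma']
  apply Finset.sum_nbij' (i := fun p => ⟨p.1 + p.2, p.1⟩) (j := fun q => ⟨q.2, q.1 - q.2⟩)
  case hi => rintro ⟨x, y⟩ ha; simp only [Finset.mem_sigma, Finset.mem_range] at ha ⊢; omega
  case hj => rintro ⟨x, y⟩ ha; simp only [Finset.mem_sigma, Finset.mem_range] at ha ⊢; omega
  case left_neg =>
    rintro ⟨x, y⟩ ha; simp only [Finset.mem_sigma, Finset.mem_range] at ha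
    simp only [Sigma.mk.inj_iff, heq_eq_eq, true_and, and_true]
    omega
  case right_neg =>
    rintro ⟨x, y⟩ ha; simp only [Finset.mem_sigma, Finset.mem_range] at ha
    simp only [Sigma.mk.inj_iff, heq_eq_eq, true_and, and_true]
    omega
  case h => rintro ⟨x, y⟩ ha; simp

lemma sum_ite_le {M N : ℕ} (h : M ≤ N) (F : ℕ → ℂ) :
    ∑ n ∈ Finset.range (N + 1), (if n ≤ M then F n else 0)
      = ∑ n ∈ Finset.range (M + 1), F n := by
  rw [← Finset.sum_subset (Finset.range_subset_range.mpr (Nat.succ_le_succ h))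
    (fun x hx hnx => by
      rw [if_neg]
      simp only [Finset.mem_range] at hx hnx
      omega)]
  exact Finset.sum_congr rfl fun n hn => if_pos (by simp only [Finset.mem_range] at hn; omega)

lemma guard2 {M N : ℕ} (hMN : M ≤ N) (F : ℕ → ℕ → ℂ) :
    ∑ a ∈ Finset.range (N+1), ∑ b ∈ Finset.range (N+1), (if a + b ≤ M then F a b else 0)
      = ∑ m ∈ Finset.range (M+1), ∑ a ∈ Finset.range (m+1), F a (m-a) := by
  have step1 : ∀ a, a ≤ N →
      (∑ b ∈ Finset.range (N+1), (if a + b ≤ M then F a b else 0))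
        = if a ≤ M then ∑ b ∈ Finset.range (M-a+1), F a b else 0 := by
    intro a _
    by_cases haM : a ≤ M
    · rw [if_pos haM, ← sum_ite_le (show M - a ≤ N by omega) (F a)]
      exact Finset.sum_congr rfl fun b _ => if_congr (by omega) rfl rfl
    · rw [if_neg haM]
      exact Finset.sum_eq_zero fun b _ => if_neg (by omega)
  rw [Finset.sum_congr rfl (fun a ha => step1 a (by simp only [Finset.mem_range] at ha; omega)),
    sum_ite_le hMN]
  exact TRIc M F

/-! ### Basic facts about `pd` -/

lemma coeff_pd (i : Fin 3) (h : F3) (w : Fin 3 →₀ ℕ) :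
    MvPowerSeries.coeff (R := ℂ) w (pd i h)
      = ((w i : ℂ) + 1) * MvPowerSeries.coeff (R := ℂ) (w + Finsupp.single i 1) h := rfl

lemma pd_add (i : Fin 3) (h₁ h₂ : F3) : pd i (h₁ + h₂) = pd i h₁ + pd i h₂ := by
  ext w
  simp only [map_add, coeff_pd]
  ring

lemma pd_smul (i : Fin 3) (c : ℂ) (h : F3) : pd i (c • h) = c • pd i h := by
  ext w
  simp only [coeff_pd, MvPowerSeries.coeff_smul]
  ring

/-- `pd i` as a `ℂ`-linear endomorphism. -/
def pdL (i : Fin 3) : F3 →ₗ[ℂ] F3 where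
  toFun := pd i
  map_add' := pd_add i
  map_smul' c h := pd_smul i c h

@[simp] lemma pdL_apply (i : Fin 3) (h : F3) : pdL i h = pd i h := rfl

lemma pd_comm (i j : Fin 3) (h : F3) : pd i (pd j h) = pd j (pd i h) := by
  ext w
  simp only [coeff_pd, Finsupp.add_apply]
  rcases eq_or_ne i j with rfl | hij
  · ring_nf
  · rw [Finsupp.single_apply, Finsupp.single_apply, if_neg hij, if_neg (Ne.symm hij)]
    rw [add_assoc, add_assoc, add_comm (Finsupp.single j 1) (Finsupp.single i 1)]
    push_cast
    ring

lemma comm_pdL (i j : Fin 3) : Commute (pdL i) (pdL j) :=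
  LinearMap.ext fun x => by
    simp only [Module.End.mul_apply, pdL_apply]
    exact pd_comm i j x

lemma sum_left (i : Fin 3) (w : Fin 3 →₀ ℕ) (H : (Fin 3 →₀ ℕ) → (Fin 3 →₀ ℕ) → ℂ) :
    ∑ p ∈ Finset.HasAntidiagonal.antidiagonal (w + Finsupp.single i 1),
        (((p.1 : Fin 3 →₀ ℕ)) i : ℂ) * H p.1 p.2
      = ∑ q ∈ Finset.HasAntidiagonal.antidiagonal w, ((q.1 i : ℂ) + 1) * H (q.1 + Finsupp.single i 1) q.2 := by
  symm
  apply Finset.sum_of_injOn (fun q => (q.1 + Finsupp.single i 1, q.2))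
  · intro q hq q' hq' hE
    simp only [Prod.mk.injEq] at hE
    exact Prod.ext (add_right_cancel hE.1) hE.2
  · intro q hq
    simp only [Finset.coe_sort_coe, Finset.mem_coe, Finset.HasAntidiagonal.mem_antidiagonal] at hq ⊢
    rw [add_right_comm, hq]
  · intro p hp hnim
    rw [Finset.HasAntidiagonal.mem_antidiagonal] at hp
    rcases Nat.eq_zero_or_pos (p.1 i) with h0 | h0
    · simp [h0]
    · exfalso
      apply hnim
      refine ⟨(p.1 - Finsupp.single i 1, p.2), ?_, ?_⟩
      · have hle : Finsupp.single i 1 ≤ p.1 := Finsupp.single_le_iff.2 h0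
        rw [Finset.mem_coe, Finset.HasAntidiagonal.mem_antidiagonal]
        rw [tsub_add_eq_add_tsub hle, hp, add_tsub_cancel_right]
      · have hle : Finsupp.single i 1 ≤ p.1 := Finsupp.single_le_iff.2 h0
        have : p.1 - Finsupp.single i 1 + Finsupp.single i 1 = p.1 :=
          tsub_add_cancel_of_le hle
        simp [this]
  · intro q hq
    have : (((q.1 + Finsupp.single i 1 : Fin 3 →₀ ℕ)) i : ℂ) = (q.1 i : ℂ) + 1 := by
      rw [Finsupp.add_apply, Finsupp.single_apply, if_pos rfl]
      push_cast; ring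
    rw [this]

lemma sum_right (i : Fin 3) (w : Fin 3 →₀ ℕ) (H : (Fin 3 →₀ ℕ) → (Fin 3 →₀ ℕ) → ℂ) :
    ∑ p ∈ Finset.HasAntidiagonal.antidiagonal (w + Finsupp.single i 1),
        (((p.2 : Fin 3 →₀ ℕ)) i : ℂ) * H p.1 p.2
      = ∑ q ∈ Finset.HasAntidiagonal.antidiagonal w, ((q.2 i : ℂ) + 1) * H q.1 (q.2 + Finsupp.single i 1) := by
  symm
  apply Finset.sum_of_injOn (fun q => (q.1, q.2 + Finsupp.single i 1))
  · intro q hq q' hq' hE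
    simp only [Prod.mk.injEq] at hE
    exact Prod.ext hE.1 (add_right_cancel hE.2)
  · intro q hq
    simp only [Finset.coe_sort_coe, Finset.mem_coe, Finset.HasAntidiagonal.mem_antidiagonal] at hq ⊢
    rw [← add_assoc, hq]
  · intro p hp hnim
    rw [Finset.HasAntidiagonal.mem_antidiagonal] at hp
    rcases Nat.eq_zero_or_pos (p.2 i) with h0 | h0
    · simp [h0]
    · exfalso
      apply hnim
      refine ⟨(p.1, p.2 - Finsupp.single i 1), ?_, ?_⟩
      · have hle : Finsupp.single i 1 ≤ p.2 := Finsupp.single_le_iff.2 h0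
        rw [Finset.mem_coe, Finset.HasAntidiagonal.mem_antidiagonal]
        rw [← add_tsub_assoc_of_le hle, hp, add_tsub_cancel_right]
      · have hle : Finsupp.single i 1 ≤ p.2 := Finsupp.single_le_iff.2 h0
        have : p.2 - Finsupp.single i 1 + Finsupp.single i 1 = p.2 :=
          tsub_add_cancel_of_le hle
        simp [this]
  · intro q hq
    have : (((q.2 + Finsupp.single i 1 : Fin 3 →₀ ℕ)) i : ℂ) = (q.2 i : ℂ) + 1 := by
      rw [Finsupp.add_apply, Finsupp.single_apply, if_pos rfl]
      push_cast; ring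
    rw [this]

lemma pd_mul (i : Fin 3) (h₁ h₂ : F3) :
    pd i (h₁ * h₂) = pd i h₁ * h₂ + h₁ * pd i h₂ := by
  ext w
  classical
  rw [map_add, coeff_pd, MvPowerSeries.coeff_mul, MvPowerSeries.coeff_mul,
    MvPowerSeries.coeff_mul, Finset.mul_sum]
  have key : ∀ p ∈ Finset.HasAntidiagonal.antidiagonal (w + Finsupp.single i 1),
      ((w i : ℂ) + 1) * (MvPowerSeries.coeff (R := ℂ) p.1 h₁ * MvPowerSeries.coeff (R := ℂ) p.2 h₂)
        = (p.1 i : ℂ) * (MvPowerSeries.coeff (R := ℂ) p.1 h₁ * MvPowerSeries.coeff (R := ℂ) p.2 h₂)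
          + (p.2 i : ℂ) * (MvPowerSeries.coeff (R := ℂ) p.1 h₁ * MvPowerSeries.coeff (R := ℂ) p.2 h₂) := by
    intro p hp
    rw [Finset.HasAntidiagonal.mem_antidiagonal] at hp
    have h1 : p.1 i + p.2 i = w i + 1 := by
      rw [← Finsupp.add_apply, hp, Finsupp.add_apply, Finsupp.single_apply, if_pos rfl]
    have h2 : (p.1 i : ℂ) + (p.2 i : ℂ) = (w i : ℂ) + 1 := by
      have := congrArg (Nat.cast : ℕ → ℂ) h1
      push_cast at this
      linear_combination this
    rw [← h2]; ring
  rw [Finset.sum_congr rfl key, Finset.sum_add_distrib]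
  congr 1
  · rw [sum_left i w (fun a b => MvPowerSeries.coeff (R := ℂ) a h₁ * MvPowerSeries.coeff (R := ℂ) b h₂)]
    apply Finset.sum_congr rfl
    intro q hq
    rw [coeff_pd]
    ring
  · rw [sum_right i w (fun a b => MvPowerSeries.coeff (R := ℂ) a h₁ * MvPowerSeries.coeff (R := ℂ) b h₂)]
    apply Finset.sum_congr rfl
    intro q hq
    rw [coeff_pd]
    ring

/-! ### `t`-power multiplication -/

lemma coeff_ttpow_mul (k : ℕ) (h : F3) (w : Fin 3 →₀ ℕ) :
    MvPowerSeries.coeff (R := ℂ) w ((MvPowerSeries.X 0 : F3) ^ k * h)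
      = if k ≤ w 0 then MvPowerSeries.coeff (R := ℂ) (w - Finsupp.single 0 k) h else 0 := by
  classical
  rw [MvPowerSeries.X_pow_eq, MvPowerSeries.coeff_monomial_mul]
  by_cases hk : Finsupp.single 0 k ≤ w
  · rw [if_pos hk, if_pos (by simpa using Finsupp.single_le_iff.mp hk), one_mul]
  · rw [if_neg hk, if_neg (by simpa using fun h => hk (Finsupp.single_le_iff.mpr h))]

lemma index_shift (w : Fin 3 →₀ ℕ) (i : Fin 3) (hi : i ≠ 0) (k : ℕ) :
    w + Finsupp.single i 1 - Finsupp.single 0 k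
      = w - Finsupp.single 0 k + Finsupp.single i 1 := by
  ext a
  simp only [Finsupp.add_apply, Finsupp.tsub_apply, Finsupp.single_apply]
  split_ifs <;> omega

lemma e0_sub_sub (w : Fin 3 →₀ ℕ) (k j : ℕ) :
    w - Finsupp.single 0 k - Finsupp.single 0 j = w - Finsupp.single 0 (k + j) := by
  ext a
  simp only [Finsupp.tsub_apply, Finsupp.single_apply]
  split_ifs <;> omega

lemma e0_sub_zero (w : Fin 3 →₀ ℕ) (k : ℕ) :
    ((w - Finsupp.single 0 k : Fin 3 →₀ ℕ)) 0 = w 0 - k := by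
  simp [Finsupp.tsub_apply, Finsupp.single_apply]

lemma pd_tt (i : Fin 3) (hi : i ≠ 0) (k : ℕ) (h : F3) :
    pd i ((MvPowerSeries.X 0 : F3) ^ k * h)
      = (MvPowerSeries.X 0 : F3) ^ k * pd i h := by
  ext w
  rw [coeff_pd, coeff_ttpow_mul, coeff_ttpow_mul]
  have h0 : ((w + Finsupp.single i 1 : Fin 3 →₀ ℕ)) 0 = w 0 := by
    simp [Finsupp.single_apply, hi]
  rw [h0]
  by_cases hk : k ≤ w 0
  · rw [if_pos hk, if_pos hk, coeff_pd]
    have hia : ((w - Finsupp.single 0 k : Fin 3 →₀ ℕ)) i = w i := by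
      simp only [Finsupp.tsub_apply, Finsupp.single_apply]
      split_ifs with h1
      · exact absurd h1.symm hi
      · omega
    rw [hia, index_shift w i hi k]
  · rw [if_neg hk, if_neg hk, mul_zero]

/-! ### Iterates of `pd` -/

lemma pd_iter_eq_pow (i : Fin 3) (n : ℕ) (x : F3) :
    (pd i)^[n] x = ((pdL i) ^ n) x := by
  rw [Module.End.pow_apply]; rfl

lemma pd_iter_smul (i : Fin 3) (n : ℕ) (c : ℂ) (x : F3) :
    (pd i)^[n] (c • x) = c • (pd i)^[n] x := by
  simp only [pd_iter_eq_pow, map_smul]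

lemma pd_iter_sum (i : Fin 3) (n : ℕ) {ι : Type*} (s : Finset ι) (F : ι → F3) :
    (pd i)^[n] (∑ j ∈ s, F j) = ∑ j ∈ s, (pd i)^[n] (F j) := by
  simp only [pd_iter_eq_pow, map_sum]

lemma pd_iter_tt {i : Fin 3} (hi : i ≠ 0) (n k : ℕ) (h : F3) :
    (pd i)^[n] ((MvPowerSeries.X 0 : F3) ^ k * h)
      = (MvPowerSeries.X 0 : F3) ^ k * (pd i)^[n] h := by
  induction n with
  | zero => simp
  | succ n ih =>
      rw [Function.iterate_succ_apply', ih, pd_tt i hi, Function.iterate_succ_apply']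

lemma pd_iter_comm (i j : Fin 3) (s r : ℕ) (x : F3) :
    (pd i)^[s] ((pd j)^[r] x) = (pd j)^[r] ((pd i)^[s] x) := by
  simp only [pd_iter_eq_pow]
  have h := (comm_pdL i j).pow_pow s r
  calc ((pdL i) ^ s) (((pdL j) ^ r) x) = (((pdL i) ^ s) * ((pdL j) ^ r)) x := rfl
    _ = (((pdL j) ^ r) * ((pdL i) ^ s)) x := by rw [h]
    _ = ((pdL j) ^ r) (((pdL i) ^ s) x) := rfl

lemma one_ne : (1 : Fin 3) ≠ 0 := by decide
lemma two_ne : (2 : Fin 3) ≠ 0 := by decide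


/-! ### Scalars -/

def cT (n : ℕ) : ℂ := ((-2 : ℂ))⁻¹ ^ n / (n.factorial : ℂ)
def cS (k : ℕ) : ℂ := ((k.factorial : ℂ))⁻¹
def cM (k : ℕ) : ℂ := (((2 ^ k * k.factorial : ℕ) : ℂ))⁻¹

/-! ### Coefficient formulas (definitional) -/

lemma coeff_opT (h : F3) (w : Fin 3 →₀ ℕ) :
    MvPowerSeries.coeff (R := ℂ) w (opT h)
      = ∑ n ∈ Finset.range (w 0 + 1),
        cT n * MvPowerSeries.coeff (R := ℂ) (w - Finsupp.single 0 n) ((pd 1)^[n] ((pd 2)^[n] h)) := rfl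

lemma coeff_starS (f g : F3) (w : Fin 3 →₀ ℕ) :
    MvPowerSeries.coeff (R := ℂ) w (starS f g)
      = ∑ k ∈ Finset.range (w 0 + 1),
        cS k * MvPowerSeries.coeff (R := ℂ) (w - Finsupp.single 0 k)
          ((pd 2)^[k] f * (pd 1)^[k] g) := rfl

lemma coeff_starM (f g : F3) (w : Fin 3 →₀ ℕ) :
    MvPowerSeries.coeff (R := ℂ) w (starM f g)
      = ∑ k ∈ Finset.range (w 0 + 1),
        cM k * MvPowerSeries.coeff (R := ℂ) (w - Finsupp.single 0 k)
          (∑ n ∈ Finset.range (k + 1),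
            (((-1 : ℂ)) ^ (k - n) * (k.choose n : ℂ)) •
              ((pd 2)^[n] ((pd 1)^[k - n] f) * (pd 2)^[k - n] ((pd 1)^[n] g))) := rfl

/-! ### Truncated operators -/

/-- truncated transition operator -/
def opTt (N : ℕ) (h : F3) : F3 :=
  ∑ n ∈ Finset.range (N + 1),
    cT n • ((MvPowerSeries.X 0 : F3) ^ n * (pd 1)^[n] ((pd 2)^[n] h))

/-- truncated standard star product -/
def starSt (N : ℕ) (f g : F3) : F3 :=
  ∑ k ∈ Finset.range (N + 1),
    cS k • ((MvPowerSeries.X 0 : F3) ^ k * ((pd 2)^[k] f * (pd 1)^[k] g))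

/-! ### Equality up to `t`-degree `N` -/

def Rel (N : ℕ) (h h' : F3) : Prop :=
  ∀ v : Fin 3 →₀ ℕ, v 0 ≤ N → MvPowerSeries.coeff (R := ℂ) v h = MvPowerSeries.coeff (R := ℂ) v h'

lemma rel_refl {N : ℕ} (h : F3) : Rel N h h := fun _ _ => rfl

lemma rel_trans {N : ℕ} {h₁ h₂ h₃ : F3} (e₁ : Rel N h₁ h₂) (e₂ : Rel N h₂ h₃) :
    Rel N h₁ h₃ := fun v hv => (e₁ v hv).trans (e₂ v hv)

lemma rel_pd {N : ℕ} {h h' : F3} (hR : Rel N h h') {i : Fin 3} (hi : i ≠ 0) :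
    Rel N (pd i h) (pd i h') := by
  intro v hv
  rw [coeff_pd, coeff_pd, hR]
  have : ((v + Finsupp.single i 1 : Fin 3 →₀ ℕ)) 0 = v 0 := by
    simp [Finsupp.single_apply, hi]
  omega

lemma rel_pd_iter {N : ℕ} {h h' : F3} (hR : Rel N h h') {i : Fin 3} (hi : i ≠ 0) (n : ℕ) :
    Rel N ((pd i)^[n] h) ((pd i)^[n] h') := by
  induction n with
  | zero => simpa using hR
  | succ n ih =>
      intro v hv
      rw [Function.iterate_succ_apply', Function.iterate_succ_apply']
      exact rel_pd ih hi v hv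

lemma rel_mul {N : ℕ} {h₁ h₂ h₁' h₂' : F3} (e₁ : Rel N h₁ h₁') (e₂ : Rel N h₂ h₂') :
    Rel N (h₁ * h₂) (h₁' * h₂') := by
  intro v hv
  classical
  rw [MvPowerSeries.coeff_mul, MvPowerSeries.coeff_mul]
  refine Finset.sum_congr rfl fun p hp => ?_
  rw [Finset.HasAntidiagonal.mem_antidiagonal] at hp
  have h0 : p.1 0 + p.2 0 = v 0 := by
    rw [← Finsupp.add_apply, hp]
  rw [e₁ p.1 (by omega), e₂ p.2 (by omega)]

lemma rel_smul {N : ℕ} {h h' : F3} (hR : Rel N h h') (c : ℂ) :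
    Rel N (c • h) (c • h') := by
  intro v hv
  rw [MvPowerSeries.coeff_smul, MvPowerSeries.coeff_smul, hR v hv]

lemma rel_sum {N : ℕ} {ι : Type*} {s : Finset ι} {F G : ι → F3}
    (h : ∀ j ∈ s, Rel N (F j) (G j)) :
    Rel N (∑ j ∈ s, F j) (∑ j ∈ s, G j) := by
  intro v hv
  rw [map_sum, map_sum]
  exact Finset.sum_congr rfl fun j hj => h j hj v hv

lemma rel_ttmul {N : ℕ} {h h' : F3} (hR : Rel N h h') (k : ℕ) :
    Rel N ((MvPowerSeries.X 0 : F3) ^ k * h) ((MvPowerSeries.X 0 : F3) ^ k * h') := by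
  intro v hv
  rw [coeff_ttpow_mul, coeff_ttpow_mul]
  by_cases hk : k ≤ v 0
  · rw [if_pos hk, if_pos hk, hR]
    rw [e0_sub_zero]
    omega
  · rw [if_neg hk, if_neg hk]

lemma rel_opT {N : ℕ} (h : F3) : Rel N (opT h) (opTt N h) := by
  intro v hv
  rw [coeff_opT, opTt, map_sum]
  have key : ∀ n ∈ Finset.range (N + 1),
      MvPowerSeries.coeff (R := ℂ) v
          (cT n • ((MvPowerSeries.X 0 : F3) ^ n * (pd 1)^[n] ((pd 2)^[n] h)))
        = if n ≤ v 0 then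
            cT n * MvPowerSeries.coeff (R := ℂ) (v - Finsupp.single 0 n) ((pd 1)^[n] ((pd 2)^[n] h))
          else 0 := by
    intro n _
    rw [MvPowerSeries.coeff_smul, coeff_ttpow_mul, mul_ite, mul_zero]
  rw [Finset.sum_congr rfl key, sum_ite_le hv]

lemma rel_starS {N : ℕ} (f g : F3) : Rel N (starS f g) (starSt N f g) := by
  intro v hv
  rw [coeff_starS, starSt, map_sum]
  have key : ∀ k ∈ Finset.range (N + 1),
      MvPowerSeries.coeff (R := ℂ) v
          (cS k • ((MvPowerSeries.X 0 : F3) ^ k * ((pd 2)^[k] f * (pd 1)^[k] g)))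
        = if k ≤ v 0 then
            cS k * MvPowerSeries.coeff (R := ℂ) (v - Finsupp.single 0 k)
              ((pd 2)^[k] f * (pd 1)^[k] g)
          else 0 := by
    intro k _
    rw [MvPowerSeries.coeff_smul, coeff_ttpow_mul, mul_ite, mul_zero]
  rw [Finset.sum_congr rfl key, sum_ite_le hv]

lemma rel_opTt {N : ℕ} {h h' : F3} (hR : Rel N h h') : Rel N (opTt N h) (opTt N h') := by
  apply rel_sum
  intro n _
  exact rel_smul (rel_ttmul (rel_pd_iter (rel_pd_iter hR two_ne n) one_ne n) n) _

lemma rel_starM {N : ℕ} {F G F' G' : F3} (hF : Rel N F F') (hG : Rel N G G') :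
    Rel N (starM F G) (starM F' G') := by
  intro v hv
  rw [coeff_starM, coeff_starM]
  refine Finset.sum_congr rfl fun k hk => ?_
  rw [Finset.mem_range] at hk
  congr 1
  apply rel_sum (N := N) ?_ (v - Finsupp.single 0 k) (by rw [e0_sub_zero]; omega)
  intro n _
  exact rel_smul (rel_mul
    (rel_pd_iter (rel_pd_iter hF one_ne (k - n)) two_ne n)
    (rel_pd_iter (rel_pd_iter hG one_ne n) two_ne (k - n))) _


/-! ### Tensor product machinery -/

open scoped TensorProduct

abbrev FT : Type := F3 ⊗[ℂ] F3

def mu : FT →ₗ[ℂ] F3 := LinearMap.mul' ℂ F3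

@[simp] lemma mu_tmul (x y : F3) : mu (x ⊗ₜ[ℂ] y) = x * y := LinearMap.mul'_apply

def Aop : Module.End ℂ FT := LinearMap.rTensor F3 (pdL 1)
def Bop : Module.End ℂ FT := LinearMap.rTensor F3 (pdL 2)
def Cop : Module.End ℂ FT := LinearMap.lTensor F3 (pdL 1)
def Dop : Module.End ℂ FT := LinearMap.lTensor F3 (pdL 2)

lemma rT_mul (u v : F3 →ₗ[ℂ] F3) :
    LinearMap.rTensor F3 u * LinearMap.rTensor F3 v = LinearMap.rTensor F3 (u * v) := by
  rw [Module.End.mul_eq_comp, Module.End.mul_eq_comp, LinearMap.rTensor_comp]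

lemma lT_mul (u v : F3 →ₗ[ℂ] F3) :
    LinearMap.lTensor F3 u * LinearMap.lTensor F3 v = LinearMap.lTensor F3 (u * v) := by
  rw [Module.End.mul_eq_comp, Module.End.mul_eq_comp, LinearMap.lTensor_comp]

lemma comm_rl (u v : F3 →ₗ[ℂ] F3) :
    Commute (LinearMap.rTensor F3 u) (LinearMap.lTensor F3 v) := by
  unfold Commute SemiconjBy
  rw [Module.End.mul_eq_comp, Module.End.mul_eq_comp, LinearMap.rTensor_comp_lTensor,
    LinearMap.lTensor_comp_rTensor]

lemma commAB : Commute Aop Bop := by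
  unfold Aop Bop Commute SemiconjBy
  rw [rT_mul, rT_mul, (comm_pdL 1 2).eq]

lemma commCD : Commute Cop Dop := by
  unfold Cop Dop Commute SemiconjBy
  rw [lT_mul, lT_mul, (comm_pdL 1 2).eq]

lemma commAC : Commute Aop Cop := comm_rl _ _
lemma commAD : Commute Aop Dop := comm_rl _ _
lemma commBC : Commute Bop Cop := comm_rl _ _
lemma commBD : Commute Bop Dop := comm_rl _ _

lemma mu_pd (i : Fin 3) :
    (pdL i) ∘ₗ mu = mu ∘ₗ (LinearMap.rTensor F3 (pdL i) + LinearMap.lTensor F3 (pdL i)) := by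
  apply TensorProduct.ext'
  intro x y
  simp only [LinearMap.comp_apply, LinearMap.add_apply, map_add,
    LinearMap.rTensor_tmul, LinearMap.lTensor_tmul, mu_tmul, pdL_apply]
  exact pd_mul i x y

lemma pd_mu_iter (i : Fin 3) (n : ℕ) (z : FT) :
    (pd i)^[n] (mu z)
      = mu (((LinearMap.rTensor F3 (pdL i) + LinearMap.lTensor F3 (pdL i)) ^ n) z) := by
  induction n with
  | zero => simp
  | succ n ih =>
      rw [Function.iterate_succ_apply', ih, pow_succ']
      have := LinearMap.congr_fun (mu_pd i)
        (((LinearMap.rTensor F3 (pdL i) + LinearMap.lTensor F3 (pdL i)) ^ n) z)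
      simp only [LinearMap.comp_apply, pdL_apply] at this
      rw [this]
      rfl

lemma BCpow (k : ℕ) (x y : F3) :
    ((Bop * Cop) ^ k) (x ⊗ₜ[ℂ] y) = (pd 2)^[k] x ⊗ₜ[ℂ] (pd 1)^[k] y := by
  have h : Bop * Cop = TensorProduct.map (pdL 2) (pdL 1) := by
    unfold Bop Cop
    rw [Module.End.mul_eq_comp, LinearMap.rTensor_comp_lTensor]
  rw [h, TensorProduct.map_pow, TensorProduct.map_tmul, pd_iter_eq_pow, pd_iter_eq_pow]

lemma ADpow (k : ℕ) (x y : F3) :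
    ((Aop * Dop) ^ k) (x ⊗ₜ[ℂ] y) = (pd 1)^[k] x ⊗ₜ[ℂ] (pd 2)^[k] y := by
  have h : Aop * Dop = TensorProduct.map (pdL 1) (pdL 2) := by
    unfold Aop Dop
    rw [Module.End.mul_eq_comp, LinearMap.rTensor_comp_lTensor]
  rw [h, TensorProduct.map_pow, TensorProduct.map_tmul, pd_iter_eq_pow, pd_iter_eq_pow]

lemma ABpow (a : ℕ) (x y : F3) :
    ((Aop * Bop) ^ a) (x ⊗ₜ[ℂ] y) = ((pd 1)^[a] ((pd 2)^[a] x)) ⊗ₜ[ℂ] y := by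
  have h : Aop * Bop = LinearMap.rTensor F3 (pdL 1 * pdL 2) := by
    unfold Aop Bop; rw [rT_mul]
  rw [h, LinearMap.rTensor_pow, LinearMap.rTensor_tmul, (comm_pdL 1 2).mul_pow,
    Module.End.mul_apply, pd_iter_eq_pow, pd_iter_eq_pow]

lemma CDpow (b : ℕ) (x y : F3) :
    ((Cop * Dop) ^ b) (x ⊗ₜ[ℂ] y) = x ⊗ₜ[ℂ] ((pd 1)^[b] ((pd 2)^[b] y)) := by
  have h : Cop * Dop = LinearMap.lTensor F3 (pdL 1 * pdL 2) := by
    unfold Cop Dop; rw [lT_mul]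
  rw [h, LinearMap.lTensor_pow, LinearMap.lTensor_tmul, (comm_pdL 1 2).mul_pow,
    Module.End.mul_apply, pd_iter_eq_pow, pd_iter_eq_pow]

/-! ### Binomial expansion lemmas -/

lemma fact_inv (m n : ℕ) (hn : n ≤ m) :
    ((m.factorial : ℂ))⁻¹ * (m.choose n : ℂ)
      = ((n.factorial : ℂ))⁻¹ * (((m - n).factorial : ℂ))⁻¹ := by
  have key := Nat.choose_mul_factorial_mul_factorial hn
  have h1 : (n.factorial : ℂ) ≠ 0 := Nat.cast_ne_zero.mpr n.factorial_ne_zero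
  have h2 : ((m - n).factorial : ℂ) ≠ 0 := Nat.cast_ne_zero.mpr (m - n).factorial_ne_zero
  have h3 : (m.factorial : ℂ) ≠ 0 := Nat.cast_ne_zero.mpr m.factorial_ne_zero
  have key' : (m.choose n : ℂ) * (n.factorial : ℂ) * ((m - n).factorial : ℂ)
      = (m.factorial : ℂ) := by exact_mod_cast congrArg (Nat.cast : ℕ → ℂ) key
  field_simp
  linear_combination key'

/-! ### The commuting-operator exponential identity -/

/-- `B*C - A*D`, written without subtraction to avoid instance friction. -/
def Sop : Module.End ℂ FT := Bop * Cop + ((-1 : ℂ)) • (Aop * Dop)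

def Pop : Module.End ℂ FT :=
  (2⁻¹ : ℂ) • Sop + ((-2 : ℂ))⁻¹ • (Aop * Bop) + ((-2 : ℂ))⁻¹ • (Cop * Dop)

lemma Pop_eq : Pop = ((-2 : ℂ))⁻¹ • ((Aop + Cop) * (Bop + Dop)) + Bop * Cop := by
  have hcb : Cop * Bop = Bop * Cop := commBC.symm.eq
  unfold Pop Sop
  rw [add_mul, mul_add, mul_add, hcb]
  module

lemma hACBD : Commute (Aop + Cop) (Bop + Dop) :=
  (commAB.add_right commAD).add_left (commBC.symm.add_right commCD)

lemma c_B_AB : Commute Bop (Aop * Bop) := commAB.symm.mul_right (Commute.refl Bop)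
lemma c_C_AB : Commute Cop (Aop * Bop) := commAC.symm.mul_right commBC.symm
lemma c_B_AD : Commute Bop (Aop * Dop) := commAB.symm.mul_right commBD
lemma c_C_AD : Commute Cop (Aop * Dop) := commAC.symm.mul_right commCD
lemma c_BC_AD : Commute (Bop * Cop) (Aop * Dop) := c_B_AD.mul_left c_C_AD
lemma c_BC_AB : Commute (Bop * Cop) (Aop * Bop) := c_B_AB.mul_left c_C_AB
lemma c_AD_AB : Commute (Aop * Dop) (Aop * Bop) :=
  ((Commute.refl Aop).mul_right commAB).mul_left (commAD.symm.mul_right commBD.symm)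
lemma c_B_CD : Commute Bop (Cop * Dop) := commBC.mul_right commBD
lemma c_C_CD : Commute Cop (Cop * Dop) := (Commute.refl Cop).mul_right commCD
lemma c_BC_CD : Commute (Bop * Cop) (Cop * Dop) := c_B_CD.mul_left c_C_CD
lemma c_AD_CD : Commute (Aop * Dop) (Cop * Dop) :=
  (commAC.mul_right commAD).mul_left (commCD.symm.mul_right (Commute.refl Dop))
lemma c_AB_CD : Commute (Aop * Bop) (Cop * Dop) :=
  (commAC.mul_right commAD).mul_left (c_B_CD)
lemma c_S_U : Commute Sop (Aop * Bop) := c_BC_AB.add_left (c_AD_AB.smul_left _)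
lemma c_S_V : Commute Sop (Cop * Dop) := c_BC_CD.add_left (c_AD_CD.smul_left _)

lemma expandPow {x y : Module.End ℂ FT} (h : Commute x y) (M : ℕ) :
    ((M.factorial : ℂ))⁻¹ • (x + y) ^ M
      = ∑ n ∈ Finset.range (M + 1),
          (((n.factorial : ℂ))⁻¹ * (((M - n).factorial : ℂ))⁻¹) • (x ^ n * y ^ (M - n)) := by
  rw [h.add_pow, Finset.smul_sum]
  refine Finset.sum_congr rfl fun n hn => ?_
  rw [Finset.mem_range] at hn
  have hc : (x ^ n * y ^ (M - n)) * ((M.choose n : ℕ) : Module.End ℂ FT)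
      = ((M.choose n : ℕ) : ℂ) • (x ^ n * y ^ (M - n)) := by
    rw [← (Nat.cast_commute (M.choose n) (x ^ n * y ^ (M - n))).eq, ← nsmul_eq_mul,
      ← Nat.cast_smul_eq_nsmul ℂ]
  rw [hc, smul_smul, fact_inv M n (by omega)]

lemma spadeL (m : ℕ) :
    ∑ n ∈ Finset.range (m + 1),
        (cT n * cS (m - n)) • (((Aop + Cop) * (Bop + Dop)) ^ n * (Bop * Cop) ^ (m - n))
      = ((m.factorial : ℂ))⁻¹ • Pop ^ m := by
  have hXY : Commute (((-2 : ℂ))⁻¹ • ((Aop + Cop) * (Bop + Dop))) (Bop * Cop) := by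
    have h1 : Commute (Aop + Cop) Bop := commAB.add_left commBC.symm
    have h2 : Commute (Aop + Cop) Cop := commAC.add_left (Commute.refl Cop)
    have h3 : Commute (Bop + Dop) Bop := (Commute.refl Bop).add_left commBD.symm
    have h4 : Commute (Bop + Dop) Cop := commBC.add_left commCD.symm
    exact (((h1.mul_left h3).mul_right (h2.mul_left h4))).smul_left _
  rw [Pop_eq, expandPow hXY m]
  refine Finset.sum_congr rfl fun n hn => ?_
  rw [smul_pow, smul_mul_assoc, smul_smul]
  congr 1
  simp only [cT, cS]
  ring

lemma spadeR (m : ℕ) :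
    ∑ k ∈ Finset.range (m + 1), ∑ a ∈ Finset.range (m - k + 1),
        (cM k * cT a * cT (m - k - a)) •
          (Sop ^ k * ((Aop * Bop) ^ a * (Cop * Dop) ^ (m - k - a)))
      = ((m.factorial : ℂ))⁻¹ • Pop ^ m := by
  have hP : Pop = (2⁻¹ : ℂ) • Sop
      + (((-2 : ℂ))⁻¹ • (Aop * Bop) + ((-2 : ℂ))⁻¹ • (Cop * Dop)) := by
    unfold Pop; rw [add_assoc]
  have hXW : Commute ((2⁻¹ : ℂ) • Sop)
      (((-2 : ℂ))⁻¹ • (Aop * Bop) + ((-2 : ℂ))⁻¹ • (Cop * Dop)) :=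
    (((c_S_U.smul_right _).add_right (c_S_V.smul_right _))).smul_left _
  have hUV : Commute (((-2 : ℂ))⁻¹ • (Aop * Bop)) (((-2 : ℂ))⁻¹ • (Cop * Dop)) :=
    (c_AB_CD.smul_right _).smul_left _
  rw [hP, expandPow hXW m]
  refine Finset.sum_congr rfl fun k hk => ?_
  rw [Finset.mem_range] at hk
  have step : (((k.factorial : ℂ))⁻¹ * (((m - k).factorial : ℂ))⁻¹) •
        (((2⁻¹ : ℂ) • Sop) ^ k *
          ((((-2 : ℂ))⁻¹ • (Aop * Bop) + ((-2 : ℂ))⁻¹ • (Cop * Dop))) ^ (m - k))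
      = ((k.factorial : ℂ))⁻¹ •
        (((2⁻¹ : ℂ) • Sop) ^ k *
          ((((m - k).factorial : ℂ))⁻¹ •
            ((((-2 : ℂ))⁻¹ • (Aop * Bop) + ((-2 : ℂ))⁻¹ • (Cop * Dop))) ^ (m - k))) := by
    rw [mul_smul_comm, smul_smul]
  rw [step, expandPow hUV (m - k), Finset.mul_sum, Finset.smul_sum]
  refine Finset.sum_congr rfl fun a ha => ?_
  simp only [smul_pow, smul_mul_assoc, mul_smul_comm, smul_smul]
  congr 1
  simp only [cM, cT]
  push_cast
  simp only [one_div, inv_pow]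
  ring

/-! ### The key polynomial identity -/

def Vterm (f g : F3) (n k : ℕ) : F3 :=
  (pd 1)^[n] ((pd 2)^[n] ((pd 2)^[k] f * (pd 1)^[k] g))

def Lpoly (f g : F3) (m : ℕ) : F3 :=
  ∑ n ∈ Finset.range (m + 1), (cT n * cS (m - n)) • Vterm f g n (m - n)

def InnerP (f g : F3) (k a b : ℕ) : F3 :=
  ∑ n ∈ Finset.range (k + 1),
    (((-1 : ℂ)) ^ (k - n) * (k.choose n : ℂ)) •
      ((pd 2)^[n] ((pd 1)^[k - n] ((pd 1)^[a] ((pd 2)^[a] f))) *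
        (pd 2)^[k - n] ((pd 1)^[n] ((pd 1)^[b] ((pd 2)^[b] g))))

def Rpoly (f g : F3) (m : ℕ) : F3 :=
  ∑ k ∈ Finset.range (m + 1), ∑ a ∈ Finset.range (m - k + 1),
    (cM k * cT a * cT (m - k - a)) • InnerP f g k a (m - k - a)

lemma Vterm_eq (f g : F3) (n k : ℕ) :
    Vterm f g n k
      = mu ((((Aop + Cop) * (Bop + Dop)) ^ n * (Bop * Cop) ^ k) (f ⊗ₜ[ℂ] g)) := by
  rw [Module.End.mul_apply, BCpow]
  rw [hACBD.mul_pow, Module.End.mul_apply]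
  have h2 : (pd 2)^[k] f * (pd 1)^[k] g = mu ((pd 2)^[k] f ⊗ₜ[ℂ] (pd 1)^[k] g) :=
    (mu_tmul _ _).symm
  rw [Vterm, h2, pd_mu_iter 2 n, pd_mu_iter 1 n]
  rfl

lemma InnerP_eq (f g : F3) (k a b : ℕ) :
    InnerP f g k a b
      = mu ((Sop ^ k * ((Aop * Bop) ^ a * (Cop * Dop) ^ b)) (f ⊗ₜ[ℂ] g)) := by
  rw [Module.End.mul_apply, Module.End.mul_apply, CDpow, ABpow]
  have hcomm : Commute (Bop * Cop) (((-1 : ℂ)) • (Aop * Dop)) := c_BC_AD.smul_right _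
  rw [Sop, hcomm.add_pow k]
  rw [LinearMap.sum_apply, map_sum, InnerP]
  refine Finset.sum_congr rfl fun n hn => ?_
  rw [Finset.mem_range] at hn
  have hcast : (Bop * Cop) ^ n * (((-1 : ℂ)) • (Aop * Dop)) ^ (k - n)
        * ((k.choose n : ℕ) : Module.End ℂ FT)
      = (((-1 : ℂ)) ^ (k - n) * (k.choose n : ℂ)) •
          ((Bop * Cop) ^ n * (Aop * Dop) ^ (k - n)) := by
    rw [smul_pow, mul_smul_comm, smul_mul_assoc,
      ← (Nat.cast_commute (k.choose n) ((Bop * Cop) ^ n * (Aop * Dop) ^ (k - n))).eq,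
      ← nsmul_eq_mul, ← Nat.cast_smul_eq_nsmul ℂ, smul_smul, mul_comm]
  rw [hcast, LinearMap.smul_apply, map_smul, Module.End.mul_apply, ADpow, BCpow, mu_tmul]
  rw [pd_iter_comm 1 2 n (k - n)]

lemma KEY (f g : F3) (m : ℕ) : Lpoly f g m = Rpoly f g m := by
  have hL : Lpoly f g m
      = mu ((∑ n ∈ Finset.range (m + 1),
          (cT n * cS (m - n)) • (((Aop + Cop) * (Bop + Dop)) ^ n * (Bop * Cop) ^ (m - n)))
            (f ⊗ₜ[ℂ] g)) := by
    rw [LinearMap.sum_apply, map_sum, Lpoly]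
    exact Finset.sum_congr rfl fun n _ => by
      rw [LinearMap.smul_apply, map_smul, Vterm_eq]
  have hR : Rpoly f g m
      = mu ((∑ k ∈ Finset.range (m + 1), ∑ a ∈ Finset.range (m - k + 1),
          (cM k * cT a * cT (m - k - a)) •
            (Sop ^ k * ((Aop * Bop) ^ a * (Cop * Dop) ^ (m - k - a)))) (f ⊗ₜ[ℂ] g)) := by
    rw [LinearMap.sum_apply, map_sum, Rpoly]
    refine Finset.sum_congr rfl fun k _ => ?_
    rw [LinearMap.sum_apply, map_sum]
    exact Finset.sum_congr rfl fun a _ => by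
      rw [LinearMap.smul_apply, map_smul, InnerP_eq]
  rw [hL, hR, spadeL, spadeR]


/-! ### Assembling the two sides -/

lemma ttprod (a b : ℕ) (u v : F3) :
    ((MvPowerSeries.X 0 : F3) ^ a * u) * ((MvPowerSeries.X 0 : F3) ^ b * v)
      = (MvPowerSeries.X 0 : F3) ^ (a + b) * (u * v) := by
  rw [mul_mul_mul_comm, ← pow_add]

lemma ttmul_ttmul (a b : ℕ) (x : F3) :
    (MvPowerSeries.X 0 : F3) ^ a * ((MvPowerSeries.X 0 : F3) ^ b * x)
      = (MvPowerSeries.X 0 : F3) ^ (a + b) * x := by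
  rw [← mul_assoc, ← pow_add]

lemma opTt_starSt_expand (N : ℕ) (f g : F3) :
    opTt N (starSt N f g)
      = ∑ n ∈ Finset.range (N + 1), ∑ k ∈ Finset.range (N + 1),
          (cT n * cS k) • ((MvPowerSeries.X 0 : F3) ^ (n + k) * Vterm f g n k) := by
  unfold opTt starSt
  refine Finset.sum_congr rfl fun n _ => ?_
  simp only [pd_iter_sum, pd_iter_smul, pd_iter_tt one_ne, pd_iter_tt two_ne,
    Finset.smul_sum, Finset.mul_sum, mul_smul_comm, smul_smul, ttmul_ttmul, Vterm]

lemma lhs_eq (f g : F3) (w : Fin 3 →₀ ℕ) :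
    MvPowerSeries.coeff (R := ℂ) w (opT (starS f g))
      = ∑ m ∈ Finset.range (w 0 + 1),
          MvPowerSeries.coeff (R := ℂ) (w - Finsupp.single 0 m) (Lpoly f g m) := by
  set N := w 0 with hN
  have h1 : MvPowerSeries.coeff (R := ℂ) w (opT (starS f g))
      = MvPowerSeries.coeff (R := ℂ) w (opTt N (starSt N f g)) :=
    (rel_trans (rel_opT _) (rel_opTt (rel_starS f g))) w (le_refl N)
  rw [h1, opTt_starSt_expand, map_sum]
  have step : ∀ n ∈ Finset.range (N + 1),
      MvPowerSeries.coeff (R := ℂ) w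
          (∑ k ∈ Finset.range (N + 1),
            (cT n * cS k) • ((MvPowerSeries.X 0 : F3) ^ (n + k) * Vterm f g n k))
        = ∑ k ∈ Finset.range (N + 1),
            (if n + k ≤ N then
              (cT n * cS k) *
                MvPowerSeries.coeff (R := ℂ) (w - Finsupp.single 0 (n + k)) (Vterm f g n k)
            else 0) := by
    intro n _
    rw [map_sum]
    refine Finset.sum_congr rfl fun k _ => ?_
    rw [MvPowerSeries.coeff_smul, coeff_ttpow_mul, mul_ite, mul_zero, ← hN]
  rw [Finset.sum_congr rfl step, guard2 (le_refl N)]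
  refine Finset.sum_congr rfl fun m hm => ?_
  rw [Lpoly, map_sum]
  refine Finset.sum_congr rfl fun n hn => ?_
  rw [Finset.mem_range] at hm hn
  rw [MvPowerSeries.coeff_smul, show n + (m - n) = m by omega]

lemma opTt_expandP (N : ℕ) (h : F3) (n j : ℕ) :
    (pd 2)^[n] ((pd 1)^[j] (opTt N h))
      = ∑ a ∈ Finset.range (N + 1),
          cT a • ((MvPowerSeries.X 0 : F3) ^ a *
            (pd 2)^[n] ((pd 1)^[j] ((pd 1)^[a] ((pd 2)^[a] h)))) := by
  unfold opTt
  simp only [pd_iter_sum, pd_iter_smul, pd_iter_tt one_ne, pd_iter_tt two_ne]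

lemma inner_expand (N : ℕ) (f g : F3) (k : ℕ) :
    (∑ n ∈ Finset.range (k + 1),
      (((-1 : ℂ)) ^ (k - n) * (k.choose n : ℂ)) •
        ((pd 2)^[n] ((pd 1)^[k - n] (opTt N f)) * (pd 2)^[k - n] ((pd 1)^[n] (opTt N g))))
      = ∑ a ∈ Finset.range (N + 1), ∑ b ∈ Finset.range (N + 1),
          (cT a * cT b) • ((MvPowerSeries.X 0 : F3) ^ (a + b) * InnerP f g k a b) := by
  simp only [opTt_expandP, Finset.sum_mul_sum, smul_mul_assoc, mul_smul_comm, smul_smul,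
    ttprod, Finset.smul_sum]
  rw [Finset.sum_comm]
  refine Finset.sum_congr rfl fun a _ => ?_
  rw [Finset.sum_comm]
  refine Finset.sum_congr rfl fun b _ => ?_
  simp only [InnerP, Finset.mul_sum, mul_smul_comm, Finset.smul_sum, smul_smul]
  refine Finset.sum_congr rfl fun n _ => ?_
  congr 1
  ring

lemma rhs_eq (f g : F3) (w : Fin 3 →₀ ℕ) :
    MvPowerSeries.coeff (R := ℂ) w (starM (opT f) (opT g))
      = ∑ m ∈ Finset.range (w 0 + 1),
          MvPowerSeries.coeff (R := ℂ) (w - Finsupp.single 0 m) (Rpoly f g m) := by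
  set N := w 0 with hN
  have h1 : MvPowerSeries.coeff (R := ℂ) w (starM (opT f) (opT g))
      = MvPowerSeries.coeff (R := ℂ) w (starM (opTt N f) (opTt N g)) :=
    rel_starM (rel_opT f) (rel_opT g) w (le_refl N)
  rw [h1, coeff_starM]
  have step1 : ∀ k ∈ Finset.range (N + 1),
      cM k * MvPowerSeries.coeff (R := ℂ) (w - Finsupp.single 0 k)
          (∑ n ∈ Finset.range (k + 1),
            (((-1 : ℂ)) ^ (k - n) * (k.choose n : ℂ)) •
              ((pd 2)^[n] ((pd 1)^[k - n] (opTt N f)) *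
                (pd 2)^[k - n] ((pd 1)^[n] (opTt N g))))
        = ∑ a ∈ Finset.range (N + 1), ∑ b ∈ Finset.range (N + 1),
            (if a + b ≤ N - k then
              (cM k * (cT a * cT b)) *
                MvPowerSeries.coeff (R := ℂ) (w - Finsupp.single 0 (k + a + b)) (InnerP f g k a b)
            else 0) := by
    intro k hk
    rw [inner_expand, map_sum, Finset.mul_sum]
    refine Finset.sum_congr rfl fun a _ => ?_
    rw [map_sum, Finset.mul_sum]
    refine Finset.sum_congr rfl fun b _ => ?_
    rw [MvPowerSeries.coeff_smul, coeff_ttpow_mul, e0_sub_zero, e0_sub_sub, ← hN]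
    rw [mul_ite, mul_ite, mul_zero, mul_zero, ← add_assoc, ← mul_assoc]
  rw [Finset.sum_congr rfl step1]
  have step2 : ∀ k ∈ Finset.range (N + 1),
      (∑ a ∈ Finset.range (N + 1), ∑ b ∈ Finset.range (N + 1),
        (if a + b ≤ N - k then
          (cM k * (cT a * cT b)) *
            MvPowerSeries.coeff (R := ℂ) (w - Finsupp.single 0 (k + a + b)) (InnerP f g k a b)
        else 0))
        = ∑ m' ∈ Finset.range (N - k + 1), ∑ a ∈ Finset.range (m' + 1),
            (cM k * (cT a * cT (m' - a))) *
              MvPowerSeries.coeff (R := ℂ) (w - Finsupp.single 0 (k + a + (m' - a)))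
                (InnerP f g k a (m' - a)) := by
    intro k _
    exact guard2 (Nat.sub_le N k) _
  rw [Finset.sum_congr rfl step2, TRIc N]
  refine Finset.sum_congr rfl fun m hm => ?_
  rw [Rpoly, map_sum]
  refine Finset.sum_congr rfl fun k hk => ?_
  rw [map_sum]
  refine Finset.sum_congr rfl fun a ha => ?_
  rw [Finset.mem_range] at hm hk ha
  rw [MvPowerSeries.coeff_smul, show k + a + (m - k - a) = m by omega, ← mul_assoc]

end StarAux

/-- T intertwines the standard and Moyal star products. -/
theorem opT_intertwines (f g : F3) : opT (starS f g) = starM (opT f) (opT g) := by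
  apply MvPowerSeries.ext
  intro w
  rw [StarAux.lhs_eq, StarAux.rhs_eq]
  exact Finset.sum_congr rfl fun m _ => by rw [StarAux.KEY]

end
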